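/- Suppose f_d is a Routh force with Routh potential β, and fix (q0,q1) ∈ E × E. Define C(u0)(u1) := D₁(D₂L_d + f⁺)(q0,q1)(u0)(u1), the derivative at q0 in direction u0 of x ↦ D₂L_d(x,q1)(u1) + f⁺(x,q1)(u1), and define ω̃⁺(q0,q1)((u0,u1),(v0,v1)) := ω⁺(q0,q1)((u0,u1),(v0,v1)) − β(q1)(u1,v1). Then: (1) ω̃⁺(q0,q1)((u0,u1),(v0,v1)) = C(v0)(u1) − C(u0)(v1) for all u0,u1,v0,v1 ∈ E; (2) the alternating bilinear form ω̃⁺(q0,q1) on E × E is nondegenerate if and only if the induced linear map E → (E →L[ℝ] ℝ), u0 ↦ C(u0), is bijective. -/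

import Mathlib

open ContinuousLinearMap

variable {E : Type*} [NormedAddCommGroup E] [NormedSpace ℝ E] [FiniteDimensional ℝ E]

/-- Partial Fréchet derivative in the first variable. -/
noncomputable def D1 (L : E × E → ℝ) (x : E × E) : E →L[ℝ] ℝ :=
  fderiv ℝ (fun a => L (a, x.2)) x.1

/-- Partial Fréchet derivative in the second variable. -/
noncomputable def D2 (L : E × E → ℝ) (x : E × E) : E →L[ℝ] ℝ :=
  fderiv ℝ (fun b => L (x.1, b)) x.2

/-- The force 1-form `f_d` on `E × E`. -/
noncomputable def fd (fm fp : E × E → (E →L[ℝ] ℝ)) (x : E × E) : (E × E) →L[ℝ] ℝ :=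
  (fm x).comp (ContinuousLinearMap.fst ℝ E E) + (fp x).comp (ContinuousLinearMap.snd ℝ E E)

/-- The 1-form `θ⁺` on `E × E`. -/
noncomputable def thetaP (Ld : E × E → ℝ) (fp : E × E → (E →L[ℝ] ℝ)) (x : E × E) :
    (E × E) →L[ℝ] ℝ := (D2 Ld x + fp x).comp (ContinuousLinearMap.snd ℝ E E)

/-- The 1-form `θ⁻` on `E × E`. -/
noncomputable def thetaM (Ld : E × E → ℝ) (fm : E × E → (E →L[ℝ] ℝ)) (x : E × E) :
    (E × E) →L[ℝ] ℝ := -((D1 Ld x + fm x).comp (ContinuousLinearMap.fst ℝ E E))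

/-- The exterior derivative of a 1-form `α` on `E × E`, as a function of two vectors. -/
noncomputable def extd (α : E × E → ((E × E) →L[ℝ] ℝ)) (x : E × E) (U V : E × E) : ℝ :=
  fderiv ℝ α x U V - fderiv ℝ α x V U

/-- The 2-form `ω⁺ := -dθ⁺` on `E × E`. -/
noncomputable def omegaP (Ld : E × E → ℝ) (fp : E × E → (E →L[ℝ] ℝ)) (x : E × E)
    (U V : E × E) : ℝ := -extd (thetaP Ld fp) x U V

/-- The 2-form `ω⁻ := -dθ⁻` on `E × E`. -/
noncomputable def omegaM (Ld : E × E → ℝ) (fm : E × E → (E →L[ℝ] ℝ)) (x : E × E)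
    (U V : E × E) : ℝ := -extd (thetaM Ld fm) x U V

/-- The forced discrete Legendre transform `FL⁺`. -/
noncomputable def FLp (Ld : E × E → ℝ) (fp : E × E → (E →L[ℝ] ℝ)) (x : E × E) :
    E × (E →L[ℝ] ℝ) := (x.2, D2 Ld x + fp x)

/-- The forced discrete Legendre transform `FL⁻`. -/
noncomputable def FLm (Ld : E × E → ℝ) (fm : E × E → (E →L[ℝ] ℝ)) (x : E × E) :
    E × (E →L[ℝ] ℝ) := (x.1, -D1 Ld x - fm x)

section Aux

variable {W : Type*} [NormedAddCommGroup W] [NormedSpace ℝ W]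

omit [FiniteDimensional ℝ E] in
lemma partial1_eq {F : E × E → W} (hF : Differentiable ℝ F) (q0 q1 : E) (v : E) :
    fderiv ℝ F (q0, q1) (v, 0) = fderiv ℝ (fun a => F (a, q1)) q0 v := by
  have h1 : HasFDerivAt (fun a : E => (a, q1))
      ((ContinuousLinearMap.id ℝ E).prod 0) q0 :=
    HasFDerivAt.prodMk (hasFDerivAt_id q0) (hasFDerivAt_const q1 q0)
  have h2 : HasFDerivAt (fun a : E => F (a, q1))
      ((fderiv ℝ F (q0, q1)).comp ((ContinuousLinearMap.id ℝ E).prod 0)) q0 :=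
    ((hF (q0, q1)).hasFDerivAt).comp q0 h1
  rw [h2.fderiv]
  simp

omit [FiniteDimensional ℝ E] in
lemma partial2_eq {F : E × E → W} (hF : Differentiable ℝ F) (q0 q1 : E) (v : E) :
    fderiv ℝ F (q0, q1) (0, v) = fderiv ℝ (fun b => F (q0, b)) q1 v := by
  have h1 : HasFDerivAt (fun b : E => (q0, b))
      ((0 : E →L[ℝ] E).prod (ContinuousLinearMap.id ℝ E)) q1 :=
    HasFDerivAt.prodMk (hasFDerivAt_const q0 q1) (hasFDerivAt_id q1)
  have h2 : HasFDerivAt (fun b : E => F (q0, b))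
      ((fderiv ℝ F (q0, q1)).comp ((0 : E →L[ℝ] E).prod (ContinuousLinearMap.id ℝ E))) q1 :=
    ((hF (q0, q1)).hasFDerivAt).comp q1 h1
  rw [h2.fderiv]
  simp

omit [FiniteDimensional ℝ E] in
lemma fderiv_split {F : E × E → W} (hF : Differentiable ℝ F) (q0 q1 u0 u1 : E) :
    fderiv ℝ F (q0, q1) (u0, u1)
      = fderiv ℝ (fun a => F (a, q1)) q0 u0 + fderiv ℝ (fun b => F (q0, b)) q1 u1 := by
  have h : (u0, u1) = ((u0, 0) : E × E) + (0, u1) := by simp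
  rw [h, map_add, partial1_eq hF, partial2_eq hF]

omit [FiniteDimensional ℝ E] in
lemma fderiv_clm_postcomp {W' : Type*} [NormedAddCommGroup W'] [NormedSpace ℝ W']
    {F : E × E → W} (hF : Differentiable ℝ F) (T : W →L[ℝ] W') (x : E × E) :
    fderiv ℝ (fun y => T (F y)) x = T.comp (fderiv ℝ F x) :=
  (T.hasFDerivAt.comp x (hF x).hasFDerivAt).fderiv

end Aux

set_option maxHeartbeats 2000000 in
/-- **Formula and nondegeneracy criterion for the modified 2-form `ω̃⁺` of a system of
Routh type.** With `C := D₁(D₂L_d + f⁺)(q0,q1)`, one has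
`ω̃⁺(q0,q1)((u0,u1),(v0,v1)) = C(v0)(u1) − C(u0)(v1)`, and `ω̃⁺(q0,q1)` is nondegenerate
iff `u0 ↦ C(u0)` is bijective. -/
theorem omega_tilde_formula_and_nondegeneracy
    (Ld : E × E → ℝ) (fm fp : E × E → (E →L[ℝ] ℝ))
    (hLd : ContDiff ℝ (⊤ : ℕ∞) Ld) (hfm : ContDiff ℝ (⊤ : ℕ∞) fm) (hfp : ContDiff ℝ (⊤ : ℕ∞) fp)
    (β : E → (E →L[ℝ] E →L[ℝ] ℝ))
    (hβalt : ∀ (q : E) (u v : E), β q u v = -β q v u)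
    (hRouth : ∀ (q0 q1 u0 u1 v0 v1 : E),
      -extd (fd fm fp) (q0, q1) (u0, u1) (v0, v1) = β q1 u1 v1 - β q0 u0 v0)
    (q0 q1 : E) :
    -- (1) explicit formula for ω̃⁺(q0,q1)
    (∀ u0 u1 v0 v1 : E,
        omegaP Ld fp (q0, q1) (u0, u1) (v0, v1) - β q1 u1 v1
          = fderiv ℝ (fun a : E => D2 Ld (a, q1) + fp (a, q1)) q0 v0 u1
            - fderiv ℝ (fun a : E => D2 Ld (a, q1) + fp (a, q1)) q0 u0 v1)
    -- (2) nondegeneracy of ω̃⁺(q0,q1) ↔ bijectivity of u0 ↦ C(u0)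
    ∧ ((∀ U : E × E,
          (∀ V : E × E, omegaP Ld fp (q0, q1) U V - β q1 U.2 V.2 = 0) → U = 0)
        ↔ Function.Bijective
            (fun u0 : E => fderiv ℝ (fun a : E => D2 Ld (a, q1) + fp (a, q1)) q0 u0)) := by
    classical
  have hLd' : Differentiable ℝ Ld := hLd.differentiable (by simp)
  -- D2 Ld as a smooth map
  have hD2eq : (fun x : E × E => D2 Ld x)
      = fun x => (fderiv ℝ Ld x).comp (ContinuousLinearMap.inr ℝ E E) := by
    funext x
    have h1 : HasFDerivAt (fun b : E => (x.1, b)) (ContinuousLinearMap.inr ℝ E E) x.2 :=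
      HasFDerivAt.prodMk (hasFDerivAt_const x.1 x.2) (hasFDerivAt_id x.2)
    have h2 : HasFDerivAt (fun b : E => Ld (x.1, b))
        ((fderiv ℝ Ld x).comp (ContinuousLinearMap.inr ℝ E E)) x.2 :=
      ((hLd' x).hasFDerivAt).comp x.2 h1
    exact h2.fderiv
  have hD2smooth : ContDiff ℝ (⊤ : ℕ∞) (fun x : E × E => D2 Ld x) := by
    rw [hD2eq]
    exact (hLd.fderiv_right (by simp)).clm_comp contDiff_const
  set g : E × E → (E →L[ℝ] ℝ) := fun x => D2 Ld x + fp x with hgdef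
  have hg : ContDiff ℝ (⊤ : ℕ∞) g := hD2smooth.add hfp
  have hgdiff : Differentiable ℝ g := hg.differentiable (by simp)
  have hfmdiff : Differentiable ℝ fm := hfm.differentiable (by simp)
  have hfpdiff : Differentiable ℝ fp := hfp.differentiable (by simp)
  -- derivative of θ⁺
  set T : (E →L[ℝ] ℝ) →L[ℝ] ((E × E) →L[ℝ] ℝ) :=
    (ContinuousLinearMap.compL ℝ (E × E) E ℝ).flip (ContinuousLinearMap.snd ℝ E E) with hTdef
  have hθeq : thetaP Ld fp = fun x => T (g x) := by
    funext x
    simp [thetaP, hTdef, hgdef]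
  have hθderiv : ∀ U V : E × E,
      fderiv ℝ (thetaP Ld fp) (q0, q1) U V = fderiv ℝ g (q0, q1) U V.2 := by
    intro U V
    rw [hθeq, fderiv_clm_postcomp hgdiff T]
    simp [hTdef]
  have homega : ∀ U V : E × E, omegaP Ld fp (q0, q1) U V
      = fderiv ℝ g (q0, q1) V U.2 - fderiv ℝ g (q0, q1) U V.2 := by
    intro U V
    simp only [omegaP, extd, hθderiv]
    ring
  -- derivative of fd
  set T1 : (E →L[ℝ] ℝ) →L[ℝ] ((E × E) →L[ℝ] ℝ) :=
    (ContinuousLinearMap.compL ℝ (E × E) E ℝ).flip (ContinuousLinearMap.fst ℝ E E) with hT1def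
  have hfd_deriv : ∀ U V : E × E,
      fderiv ℝ (fd fm fp) (q0, q1) U V
        = fderiv ℝ fm (q0, q1) U V.1 + fderiv ℝ fp (q0, q1) U V.2 := by
    intro U V
    have heq : fd fm fp = fun x : E × E => T1 (fm x) + T (fp x) := by
      funext x
      simp [fd, hT1def, hTdef]
    have hFD : HasFDerivAt (fun x : E × E => T1 (fm x) + T (fp x))
        (T1.comp (fderiv ℝ fm (q0, q1)) + T.comp (fderiv ℝ fp (q0, q1))) (q0, q1) :=
      (T1.hasFDerivAt.comp _ ((hfmdiff (q0, q1)).hasFDerivAt)).add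
        (T.hasFDerivAt.comp _ ((hfpdiff (q0, q1)).hasFDerivAt))
    have h1 : fderiv ℝ (fd fm fp) (q0, q1)
        = T1.comp (fderiv ℝ fm (q0, q1)) + T.comp (fderiv ℝ fp (q0, q1)) := by
      rw [heq]
      exact hFD.fderiv
    rw [h1]
    simp [hT1def, hTdef]
  -- Routh identity for the second partial of fp
  have hRouth' : ∀ u1 v1 : E,
      fderiv ℝ (fun b => fp (q0, b)) q1 v1 u1 - fderiv ℝ (fun b => fp (q0, b)) q1 u1 v1
        = β q1 u1 v1 := by
    intro u1 v1
    have h := hRouth q0 q1 0 u1 0 v1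
    simp only [extd, hfd_deriv] at h
    rw [partial2_eq hfpdiff, partial2_eq hfpdiff] at h
    simpa using h
  -- symmetry of the second partial of Ld in the second variable
  have hLdq0 : ContDiff ℝ (⊤ : ℕ∞) (fun b : E => Ld (q0, b)) :=
    hLd.comp (contDiff_const.prodMk contDiff_id)
  have hD2Ld_eq : (fun b : E => D2 Ld (q0, b)) = fderiv ℝ (fun b : E => Ld (q0, b)) := rfl
  have hsymm : ∀ u v : E,
      fderiv ℝ (fun b : E => D2 Ld (q0, b)) q1 u v
        = fderiv ℝ (fun b : E => D2 Ld (q0, b)) q1 v u := by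
    have h := ((hLdq0.of_le (WithTop.coe_le_coe.mpr le_top)).contDiffAt :
      ContDiffAt ℝ 2 (fun b : E => Ld (q0, b)) q1).isSymmSndFDerivAt (by norm_num)
    intro u v
    rw [hD2Ld_eq]
    exact h u v
  -- split the second partial of g
  have hd2Ld : Differentiable ℝ (fun b : E => D2 Ld (q0, b)) :=
    (hD2smooth.comp (contDiff_const.prodMk contDiff_id)).differentiable (by simp)
  have hd2fp : Differentiable ℝ (fun b : E => fp (q0, b)) :=
    (hfp.comp (contDiff_const.prodMk contDiff_id)).differentiable (by simp)
  have hBsplit : fderiv ℝ (fun b => g (q0, b)) q1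
      = fderiv ℝ (fun b => D2 Ld (q0, b)) q1 + fderiv ℝ (fun b => fp (q0, b)) q1 := by
    exact fderiv_add (hd2Ld q1) (hd2fp q1)
  -- the key formula
  set C : E →L[ℝ] (E →L[ℝ] ℝ) :=
    fderiv ℝ (fun a : E => D2 Ld (a, q1) + fp (a, q1)) q0 with hCdef
  have hgq1 : (fun a : E => g (a, q1)) = (fun a : E => D2 Ld (a, q1) + fp (a, q1)) := by
    funext a
    rw [hgdef]
  have hAeq : fderiv ℝ (fun a => g (a, q1)) q0 = C := by
    rw [hgq1, hCdef]
  have key : ∀ u0 u1 v0 v1 : E,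
      omegaP Ld fp (q0, q1) (u0, u1) (v0, v1) - β q1 u1 v1 = C v0 u1 - C u0 v1 := by
    intro u0 u1 v0 v1
    rw [homega, fderiv_split hgdiff, fderiv_split hgdiff, hAeq, hBsplit]
    have hβ := hRouth' u1 v1
    have hs := hsymm u1 v1
    simp only [ContinuousLinearMap.add_apply]
    linarith
  constructor
  · exact fun u0 u1 v0 v1 => key u0 u1 v0 v1
  · have key' : ∀ U V : E × E,
        omegaP Ld fp (q0, q1) U V - β q1 U.2 V.2 = C V.1 U.2 - C U.1 V.2 := by
      intro U V
      exact key U.1 U.2 V.1 V.2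
    constructor
    · intro h
      have hinj : Function.Injective (fun u0 : E => C u0) := by
        intro a b hab
        have hC0 : C (a - b) = 0 := by
          rw [map_sub]
          simpa [sub_eq_zero] using hab
        have hz := h (a - b, 0) (fun V => by rw [key']; simp [hC0])
        have : a - b = 0 := congrArg Prod.fst hz
        exact sub_eq_zero.mp this
      have hfr : Module.finrank ℝ E = Module.finrank ℝ (E →L[ℝ] ℝ) := by
        rw [← (LinearMap.toContinuousLinearMap :
          (E →ₗ[ℝ] ℝ) ≃ₗ[ℝ] (E →L[ℝ] ℝ)).finrank_eq, Module.finrank_linearMap_self]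
      exact ⟨hinj,
        (LinearMap.injective_iff_surjective_of_finrank_eq_finrank hfr).mp hinj⟩
    · rintro ⟨hinj, hsurj⟩ U hU
      have h2 : U.2 = 0 := by
        have hall : ∀ ψ : Module.Dual ℝ E, ψ U.2 = 0 := by
          intro ψ
          obtain ⟨v0, hv0⟩ := hsurj (LinearMap.toContinuousLinearMap ψ)
          have h := hU (v0, 0)
          rw [key'] at h
          simp only [map_zero, ContinuousLinearMap.zero_apply, sub_zero] at h
          have hv0' : C v0 = LinearMap.toContinuousLinearMap ψ := hv0
          have : C v0 U.2 = 0 := h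
          rw [hv0'] at this
          simpa using this
        exact (Module.forall_dual_apply_eq_zero_iff ℝ U.2).mp hall
      have h1 : U.1 = 0 := by
        have hC : C U.1 = 0 := by
          ext v1
          have h := hU (0, v1)
          rw [key'] at h
          simp only [map_zero, ContinuousLinearMap.zero_apply] at h
          simpa using h.symm
        have : (fun u0 : E => C u0) U.1 = (fun u0 : E => C u0) 0 := by simp [hC]
        exact hinj this
      exact Prod.ext h1 h2
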